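/- A Wheel Random Apollonian Graph WRAG(m,n) (obtained from seed W_m after n - m steps) has exactly 3n - 8 triangles if m = 4, and 3n - 2m - 1 triangles if m > 4. -/
import Mathlib


/-- The wheel graph on vertex set `{0, …, m-1} ⊆ ℕ` with hub `0`. -/
def wheelN (m : ℕ) : SimpleGraph ℕ :=
  SimpleGraph.fromRel (fun v w =>
    v < m ∧ w < m ∧ (v = 0 ∨ (w = v + 1 ∧ 1 ≤ v) ∨ (v = m - 1 ∧ w = 1)))

/-- `IsWRAGS m i G C` holds when `G` is a graph obtainable after `i` steps of the
Wheel Random Apollonian Graph Sequence with seed the wheel `W_m`, where `C` is the set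
of triangles chosen in previous steps.  At each step a triangle `t` of the current
graph, not chosen before, is selected and a new vertex (labelled `m + i`) is joined to
its three vertices. -/
inductive IsWRAGS (m : ℕ) : ℕ → SimpleGraph ℕ → Set (Finset ℕ) → Prop
  | base : IsWRAGS m 0 (wheelN m) ∅
  | step {i : ℕ} {G : SimpleGraph ℕ} {C : Set (Finset ℕ)} (t : Finset ℕ)
      (hmem : t ∈ G.cliqueSet 3) (hnew : t ∉ C) (h : IsWRAGS m i G C) :
      IsWRAGS m (i + 1)
        (G ⊔ SimpleGraph.fromRel (fun v w => v = m + i ∧ w ∈ t)) (insert t C)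

lemma wheel_adj {m : ℕ} (hm : 4 ≤ m) {a b : ℕ} :
    (wheelN m).Adj a b ↔ a ≠ b ∧ a < m ∧ b < m ∧
      (a = 0 ∨ b = 0 ∨ b = a + 1 ∨ a = b + 1 ∨ (a = m - 1 ∧ b = 1) ∨ (b = m - 1 ∧ a = 1)) := by
  simp only [wheelN, SimpleGraph.fromRel_adj]
  omega

def wheelTriFinset (m : ℕ) : Finset (Finset ℕ) :=
  (Finset.range (m - 1)).image
      (fun k => ({0, k + 1, if k + 2 = m then 1 else k + 2} : Finset ℕ))
    ∪ (if m = 4 then {({1, 2, 3} : Finset ℕ)} else ∅)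

lemma wheel_cliqueSet {m : ℕ} (hm : 4 ≤ m) :
    (wheelN m).cliqueSet 3 = ↑(wheelTriFinset m) := by
  ext s
  simp only [SimpleGraph.mem_cliqueSet_iff, SimpleGraph.is3Clique_iff,
    Finset.coe_union, Set.mem_union, Finset.coe_image, Set.mem_image,
    Finset.mem_coe, Finset.mem_range, wheelTriFinset, Set.mem_setOf_eq]
  constructor
  · rintro ⟨a, b, c, hab, hac, hbc, rfl⟩
    rw [wheel_adj hm] at hab hac hbc
    obtain ⟨hab1, ham, hbm, hab2⟩ := hab
    obtain ⟨hac1, -, hcm, hac2⟩ := hac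
    obtain ⟨hbc1, -, -, hbc2⟩ := hbc
    -- helper to build membership in the image with {0,y,z}
    by_cases h0 : a = 0 ∨ b = 0 ∨ c = 0
    · -- triangle containing hub
      have key : ∀ y z : ℕ, y ≠ 0 → z ≠ 0 → y < m → z < m → y ≠ z →
          (z = y + 1 ∨ y = z + 1 ∨ (y = m - 1 ∧ z = 1) ∨ (z = m - 1 ∧ y = 1)) →
          ∃ k < m - 1, ({0, k + 1, if k + 2 = m then 1 else k + 2} : Finset ℕ)
            = {0, y, z} := by
        intro y z hy hz hym hzm hyz hrel
        rcases hrel with h | h | ⟨h1, h2⟩ | ⟨h1, h2⟩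
        · exact ⟨y - 1, by omega, by ext x; simp; split_ifs <;> omega⟩
        · refine ⟨z - 1, by omega, by ext x; simp; split_ifs <;> omega⟩
        · exact ⟨m - 2, by omega, by ext x; simp; split_ifs <;> omega⟩
        · exact ⟨m - 2, by omega, by ext x; simp; split_ifs <;> omega⟩
      rcases h0 with rfl | rfl | rfl
      · left; exact key b c (by omega) (by omega) hbm hcm hbc1 (by omega)
      · left
        obtain ⟨k, hk, he⟩ := key a c (by omega) (by omega) ham hcm hac1 (by omega)
        exact ⟨k, hk, by rw [he]; ext x; simp; omega⟩
      · left
        obtain ⟨k, hk, he⟩ := key a b (by omega) (by omega) ham hbm hab1 (by omega)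
        exact ⟨k, hk, by rw [he]; ext x; simp; omega⟩
    · -- no hub: m must be 4
      push_neg at h0
      obtain ⟨ha0, hb0, hc0⟩ := h0
      have hm4 : m = 4 := by omega
      right
      simp [hm4]
      ext x; simp; omega
  · rintro (⟨k, hk, rfl⟩ | hs)
    · refine ⟨0, k + 1, if k + 2 = m then 1 else k + 2, ?_, ?_, ?_, rfl⟩ <;>
        rw [wheel_adj hm] <;> (try split_ifs) <;> omega
    · have hm4 : m = 4 := by
        by_contra h; simp [h] at hs
      rw [if_pos hm4] at hs
      simp at hs
      refine ⟨1, 2, 3, ?_, ?_, ?_, hs⟩ <;> rw [wheel_adj hm] <;> omega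

lemma wheelTri_card {m : ℕ} (hm : 4 ≤ m) :
    (wheelTriFinset m).card = if m = 4 then 4 else m - 1 := by
  have hinj : Set.InjOn
      (fun k => ({0, k + 1, if k + 2 = m then 1 else k + 2} : Finset ℕ))
      ↑(Finset.range (m - 1)) := by
    intro k hk k' hk' he
    simp only [Finset.coe_range, Set.mem_Iio] at hk hk'
    have h1 := Finset.ext_iff.mp he (k + 1)
    have h2 := Finset.ext_iff.mp he (k' + 1)
    simp [Finset.mem_insert] at h1 h2
    split_ifs at h1 h2 <;> omega
  have hcard : ((Finset.range (m - 1)).image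
      (fun k => ({0, k + 1, if k + 2 = m then 1 else k + 2} : Finset ℕ))).card
      = m - 1 := by
    rw [Finset.card_image_of_injOn hinj, Finset.card_range]
  rw [wheelTriFinset]
  split_ifs with h4
  · rw [Finset.card_union_of_disjoint, hcard, Finset.card_singleton, h4]
    simp only [Finset.disjoint_singleton_right, Finset.mem_image]
    rintro ⟨k, hk, he⟩
    have := Finset.ext_iff.mp he 0
    simp at this
  · simp [hcard]

section step
variable {G : SimpleGraph ℕ} {t : Finset ℕ} {v : ℕ}

/-- In a 3-clique, every vertex has a neighbor in the graph. -/
lemma clique_mem_lt {s : Finset ℕ} (hs : s ∈ G.cliqueSet 3)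
    (hinv : ∀ a b : ℕ, G.Adj a b → a < v ∧ b < v) : ∀ x ∈ s, x < v := by
  rw [SimpleGraph.mem_cliqueSet_iff, SimpleGraph.is3Clique_iff] at hs
  obtain ⟨a, b, c, hab, hac, hbc, rfl⟩ := hs
  intro x hx
  simp [Finset.mem_insert] at hx
  rcases hx with rfl | rfl | rfl
  · exact (hinv _ _ hab).1
  · exact (hinv _ _ hab).2
  · exact (hinv _ _ hbc).2

lemma step_cliqueSet
    (hinv : ∀ a b : ℕ, G.Adj a b → a < v ∧ b < v)
    (hmem : t ∈ G.cliqueSet 3) {a b c : ℕ}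
    (hab : G.Adj a b) (hac : G.Adj a c) (hbc : G.Adj b c) (ht : t = {a, b, c}) :
    (G ⊔ SimpleGraph.fromRel (fun x w => x = v ∧ w ∈ t)).cliqueSet 3 =
      G.cliqueSet 3 ∪ {({v, a, b} : Finset ℕ), {v, a, c}, {v, b, c}} := by
  have hta : a ∈ t := by simp [ht]
  have htb : b ∈ t := by simp [ht]
  have htc : c ∈ t := by simp [ht]
  have hlt : ∀ x ∈ t, x < v := clique_mem_lt hmem hinv
  have hGv : ∀ y : ℕ, ¬ G.Adj v y := fun y h => absurd (hinv _ _ h).1 (lt_irrefl v)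
  have hGv' : ∀ y : ℕ, ¬ G.Adj y v := fun y h => absurd (hinv _ _ h).2 (lt_irrefl v)
  have hadj : ∀ x y : ℕ,
      (G ⊔ SimpleGraph.fromRel (fun x w => x = v ∧ w ∈ t)).Adj x y ↔
      G.Adj x y ∨ (x ≠ y ∧ ((x = v ∧ y ∈ t) ∨ (y = v ∧ x ∈ t))) := by
    intro x y; simp [SimpleGraph.fromRel_adj]
  have hvt : v ∉ t := fun h => absurd (hlt v h) (lt_irrefl v)
  -- new triangles are cliques
  have hnewclique : ∀ y z : ℕ, y ∈ t → z ∈ t → y ≠ z →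
      ({v, y, z} : Finset ℕ) ∈
        (G ⊔ SimpleGraph.fromRel (fun x w => x = v ∧ w ∈ t)).cliqueSet 3 := by
    intro y z hy hz hyz
    rw [SimpleGraph.mem_cliqueSet_iff, SimpleGraph.is3Clique_iff]
    refine ⟨v, y, z, ?_, ?_, ?_, rfl⟩
    · rw [hadj]; exact Or.inr ⟨fun h => hvt (h ▸ hy), Or.inl ⟨rfl, hy⟩⟩
    · rw [hadj]; exact Or.inr ⟨fun h => hvt (h ▸ hz), Or.inl ⟨rfl, hz⟩⟩
    · rw [hadj]; left
      rw [ht] at hy hz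
      simp at hy hz
      rcases hy with rfl | rfl | rfl <;> rcases hz with rfl | rfl | rfl <;>
        first | exact absurd rfl hyz | assumption | exact (hab.symm) |
          exact (hac.symm) | exact (hbc.symm)
  have hpair : ∀ y z : ℕ, y ∈ t → z ∈ t → y ≠ z →
      ({v, y, z} : Finset ℕ) ∈ ({({v, a, b} : Finset ℕ), {v, a, c}, {v, b, c}} :
        Set (Finset ℕ)) := by
    intro y z hy hz hyz
    rw [ht] at hy hz
    simp at hy hz
    simp only [Set.mem_insert_iff, Set.mem_singleton_iff]
    rcases hy with rfl | rfl | rfl <;> rcases hz with rfl | rfl | rfl <;>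
      first
        | exact absurd rfl hyz
        | (left; ext w; simp <;> omega)
        | (right; left; ext w; simp <;> omega)
        | (right; right; ext w; simp <;> omega)
  ext s
  simp only [Set.mem_union]
  constructor
  · intro hs
    rw [SimpleGraph.mem_cliqueSet_iff, SimpleGraph.is3Clique_iff] at hs
    obtain ⟨x, y, z, hxy, hxz, hyz, rfl⟩ := hs
    rw [hadj] at hxy hxz hyz
    by_cases hv : x = v ∨ y = v ∨ z = v
    · right
      have get : ∀ q : ℕ, (G.Adj v q ∨ (v ≠ q ∧ ((v = v ∧ q ∈ t) ∨ (q = v ∧ v ∈ t))))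
          → q ∈ t := by
        rintro q (h | ⟨hne, ⟨-, hq⟩ | ⟨rfl, hp⟩⟩)
        · exact absurd h (hGv q)
        · exact hq
        · exact absurd hp hvt
      have get' : ∀ p : ℕ, (G.Adj p v ∨ (p ≠ v ∧ ((p = v ∧ v ∈ t) ∨ (v = v ∧ p ∈ t))))
          → p ∈ t := by
        rintro p (h | ⟨hne, ⟨rfl, hq⟩ | ⟨-, hp⟩⟩)
        · exact absurd h (hGv' p)
        · exact absurd hq hvt
        · exact hp
      have hnexy : x ≠ y := by rcases hxy with h | ⟨h, _⟩; exact h.ne; exact h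
      have hnexz : x ≠ z := by rcases hxz with h | ⟨h, _⟩; exact h.ne; exact h
      have hneyz : y ≠ z := by rcases hyz with h | ⟨h, _⟩; exact h.ne; exact h
      rcases hv with rfl | rfl | rfl
      · exact hpair y z (get _ hxy) (get _ hxz) hneyz
      · have h1 : x ∈ t := get' _ hxy
        have h2 : z ∈ t := get _ hyz
        have := hpair x z h1 h2 hnexz
        have he : ({x, y, z} : Finset ℕ) = {y, x, z} := Finset.insert_comm x y {z}
        rw [he]; exact this
      · have h1 : x ∈ t := get' _ hxz
        have h2 : y ∈ t := get' _ hyz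
        have := hpair x y h1 h2 hnexy
        have he : ({x, y, z} : Finset ℕ) = {z, x, y} := by
          rw [Finset.pair_comm y z, Finset.insert_comm x z]
        rw [he]; exact this
    · push_neg at hv
      obtain ⟨hx, hy, hz⟩ := hv
      left
      rw [SimpleGraph.mem_cliqueSet_iff, SimpleGraph.is3Clique_iff]
      have red : ∀ p q : ℕ, p ≠ v → q ≠ v →
          (G.Adj p q ∨ (p ≠ q ∧ ((p = v ∧ q ∈ t) ∨ (q = v ∧ p ∈ t)))) → G.Adj p q := by
        rintro p q hp hq (h | ⟨_, ⟨rfl, _⟩ | ⟨rfl, _⟩⟩)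
        · exact h
        · exact absurd rfl hp
        · exact absurd rfl hq
      exact ⟨x, y, z, red _ _ hx hy hxy, red _ _ hx hz hxz, red _ _ hy hz hyz, rfl⟩
  · rintro (hs | hs)
    · rw [SimpleGraph.mem_cliqueSet_iff] at hs ⊢
      exact hs.mono le_sup_left
    · simp only [Set.mem_insert_iff, Set.mem_singleton_iff] at hs
      rcases hs with rfl | rfl | rfl
      · exact hnewclique a b hta htb hab.ne
      · exact hnewclique a c hta htc hac.ne
      · exact hnewclique b c htb htc hbc.ne
end step

lemma wrag_key {m : ℕ} (hm : 4 ≤ m) :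
    ∀ {i : ℕ} {G : SimpleGraph ℕ} {C : Set (Finset ℕ)}, IsWRAGS m i G C →
      (∀ a b : ℕ, G.Adj a b → a < m + i ∧ b < m + i) ∧
      (G.cliqueSet 3).Finite ∧
      (G.cliqueSet 3).ncard = (if m = 4 then 4 else m - 1) + 3 * i := by
  intro i G C h
  induction h with
  | base =>
      refine ⟨?_, ?_, ?_⟩
      · intro a b hab
        rw [wheel_adj hm] at hab
        omega
      · rw [wheel_cliqueSet hm]; exact (wheelTriFinset m).finite_toSet
      · rw [wheel_cliqueSet hm, Set.ncard_coe_finset, wheelTri_card hm]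
        split_ifs <;> omega
  | @step i G C t hmem hnew hw ih =>
      obtain ⟨hinv, hfin, hcard⟩ := ih
      obtain ⟨a, b, c, hab, hac, hbc, ht⟩ := SimpleGraph.is3Clique_iff.mp
        (SimpleGraph.mem_cliqueSet_iff.mp hmem)
      set v := m + i with hv
      have hupd := step_cliqueSet (v := v) hinv hmem hab hac hbc ht
      have hlt : ∀ x ∈ t, x < v := clique_mem_lt hmem hinv
      have hav : a < v := hlt a (by simp [ht])
      have hbv : b < v := hlt b (by simp [ht])
      have hcv : c < v := hlt c (by simp [ht])
      have hvnot : ∀ s ∈ G.cliqueSet 3, v ∉ s := by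
        intro s hs hvs
        exact absurd (clique_mem_lt hs hinv v hvs) (lt_irrefl v)
      have hmemne : ∀ x : ℕ, x < v → x ∈ ({v, a, b} : Finset ℕ) ∨ x ∈ ({v, a, c} : Finset ℕ)
          ∨ x ∈ ({v, b, c} : Finset ℕ) → x = a ∨ x = b ∨ x = c := by
        intro x hx hmem
        simp only [Finset.mem_insert, Finset.mem_singleton] at hmem
        rcases hmem with (h|h|h)|(h|h|h)|(h|h|h) <;> omega
      have hne1 : ({v, a, b} : Finset ℕ) ≠ {v, a, c} := by
        intro h
        have hc : c ∈ ({v, a, b} : Finset ℕ) := by rw [h]; simp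
        simp only [Finset.mem_insert, Finset.mem_singleton] at hc
        rcases hc with h1 | h1 | h1
        · omega
        · exact hac.ne h1.symm
        · exact hbc.ne h1.symm
      have hne2 : ({v, a, b} : Finset ℕ) ≠ {v, b, c} := by
        intro h
        have hc : c ∈ ({v, a, b} : Finset ℕ) := by rw [h]; simp
        simp only [Finset.mem_insert, Finset.mem_singleton] at hc
        rcases hc with h1 | h1 | h1
        · omega
        · exact hac.ne h1.symm
        · exact hbc.ne h1.symm
      have hne3 : ({v, a, c} : Finset ℕ) ≠ {v, b, c} := by
        intro h
        have hb : b ∈ ({v, a, c} : Finset ℕ) := by rw [h]; simp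
        simp only [Finset.mem_insert, Finset.mem_singleton] at hb
        rcases hb with h1 | h1 | h1
        · omega
        · exact hab.ne h1.symm
        · exact hbc.ne h1
      set N : Set (Finset ℕ) := {({v, a, b} : Finset ℕ), {v, a, c}, {v, b, c}} with hN
      have hNfin : N.Finite :=
        (Set.finite_singleton _).insert _ |>.insert _
      have hvinN : ∀ s ∈ N, v ∈ s := by
        intro s hs
        rcases hs with rfl | rfl | rfl <;> simp
      have hdisj : Disjoint (G.cliqueSet 3) N := by
        rw [Set.disjoint_left]
        intro s hs hsN
        exact hvnot s hs (hvinN s hsN)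
      have hNcard : N.ncard = 3 := by
        rw [hN]
        rw [Set.ncard_insert_of_notMem (by simp [hne1, hne2])
          ((Set.finite_singleton _).insert _),
          Set.ncard_insert_of_notMem (by simp [hne3]) (Set.finite_singleton _),
          Set.ncard_singleton]
      refine ⟨?_, ?_, ?_⟩
      · intro x y hxy
        simp only [SimpleGraph.sup_adj, SimpleGraph.fromRel_adj] at hxy
        rcases hxy with hxy | ⟨-, ⟨hx, hyt⟩ | ⟨hy, hxt⟩⟩
        · have := hinv _ _ hxy; omega
        · have := hlt _ hyt; omega
        · have := hlt _ hxt; omega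
      · rw [hupd]; exact hfin.union hNfin
      · rw [hupd, Set.ncard_union_eq hdisj hfin hNfin, hcard, hNcard]
        split_ifs <;> omega
  
/-- A Wheel Random Apollonian Graph `WRAG(m,n)` (seed `W_m`, `n - m` steps) has
`3n - 8` triangles if `m = 4` and `3n - 2m - 1` triangles if `m > 4`. -/
theorem wrag_triangle_count (m n : ℕ) (hm : 4 ≤ m) (hn : m < n) (G : SimpleGraph ℕ)
    (C : Set (Finset ℕ)) (h : IsWRAGS m (n - m) G C) :
    (G.cliqueSet 3).ncard = if m = 4 then 3 * n - 8 else 3 * n - 2 * m - 1 := by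
  obtain ⟨-, -, hcard⟩ := wrag_key hm h
  rw [hcard]
  split_ifs <;> omega
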